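/- arXiv:1905.07705 — 11 statements merged into one kernel-verified Lean document; each statement's English description precedes it below -/
import Mathlib

section
/- If the composition function f is fair, then T satisfies the k-safety property (pre, post) if and only if the composed system T^f satisfies (pre, post) as an ordinary safety property. -/
namespace ListAux
variable {α : Type*}

lemma destutter'_head? (R : α → α → Prop) [DecidableRel R] (l : List α) (a : α) :
    (l.destutter' R a).head? = some a := by
  induction l generalizing a with
  | nil => rfl
  | cons b l ih =>
    rw [List.destutter'_cons]
    split_ifs with h
    · rfl
    · exact ih a

lemma destutter'_getLast? [DecidableRel (fun a b : α => a ≠ b)] (l : List α) (a : α) :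
    (l.destutter' (· ≠ ·) a).getLast? = (a :: l).getLast? := by
  induction l generalizing a with
  | nil => rfl
  | cons b l ih =>
    rw [List.destutter'_cons]
    split_ifs with h
    · obtain ⟨c, m, hcm⟩ :=
        List.exists_cons_of_ne_nil (List.destutter'_ne_nil (R := (· ≠ ·)) l (a := b))
      rw [hcm, List.getLast?_cons_cons, ← hcm, ih b, List.getLast?_cons_cons]
    · push_neg at h
      subst h
      rw [ih a, List.getLast?_cons_cons]

lemma destutter'_chain' (R : α → α → Prop) [DecidableRel (fun a b : α => a ≠ b)]
    (l : List α) (a : α) (h : (a :: l).Chain' fun x y => R x y ∨ x = y) :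
    (l.destutter' (· ≠ ·) a).Chain' R := by
  induction l generalizing a with
  | nil => exact List.isChain_singleton a
  | cons b l ih =>
    unfold List.Chain' at h
    rw [List.isChain_cons_cons] at h
    rw [List.destutter'_cons]
    split_ifs with hab
    · unfold List.Chain'
      rw [List.isChain_cons]
      refine ⟨fun y hy => ?_, ih b h.2⟩
      rw [destutter'_head? _ l b] at hy
      cases hy
      exact h.1.resolve_right hab
    · push_neg at hab
      subst hab
      exact ih a h.2

lemma destutter_head? [DecidableRel (fun a b : α => a ≠ b)] (l : List α) :
    (l.destutter (· ≠ ·)).head? = l.head? := by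
  cases l with
  | nil => rfl
  | cons a l => rw [List.destutter_cons', destutter'_head?]; rfl

lemma destutter_getLast? [DecidableRel (fun a b : α => a ≠ b)] (l : List α) :
    (l.destutter (· ≠ ·)).getLast? = l.getLast? := by
  cases l with
  | nil => rfl
  | cons a l => rw [List.destutter_cons', destutter'_getLast?]

lemma destutter_chain' (R : α → α → Prop) [DecidableRel (fun a b : α => a ≠ b)]
    (l : List α) (h : l.Chain' fun x y => R x y ∨ x = y) :
    (l.destutter (· ≠ ·)).Chain' R := by
  cases l with
  | nil => exact List.isChain_nil
  | cons a l => rw [List.destutter_cons']; exact destutter'_chain' R l a h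

end ListAux

/-- Transition relation of the composed system `T^f`. -/
def compStep {S : Type*} {k : ℕ} (R : S → S → Prop)
    (f : (Fin k → S) → Finset (Fin k)) (x x' : Fin k → S) : Prop :=
  (∀ i ∈ f x, R (x i) (x' i)) ∧ ∀ i ∉ f x, x' i = x i

/-- A terminating execution of `T = (S, R, F)`: a finite `R`-chain ending in a terminal
state. -/
def Terminating {S : Type*} (R : S → S → Prop) (F : Set S) (l : List S) : Prop :=
  l.Chain' R ∧ ∃ t, l.getLast? = some t ∧ t ∈ F

open Classical in
/-- `f` is fair: for every `k` terminating executions of `T` there is an execution of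
`T^f` whose projection to copy `i` is (up to stuttering) the `i`-th given execution. -/
def Fair {S : Type*} {k : ℕ} (R : S → S → Prop) (F : Set S)
    (f : (Fin k → S) → Finset (Fin k)) : Prop :=
  ∀ π : Fin k → List S, (∀ i, Terminating R F (π i)) →
    ∃ L : List (Fin k → S), L.Chain' (compStep R f) ∧
      ∀ i, (L.map (fun x => x i)).destutter (· ≠ ·) = (π i).destutter (· ≠ ·)

/-- If the composition function `f` is fair, then `T` satisfies the
`k`-safety property `(pre, post)` iff the composed system `T^f` satisfies `(pre, post)`
as an ordinary safety property. -/
theorem kSafety_iff_composed_safety {S : Type*} {k : ℕ} (hk : 0 < k)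
    (R : S → S → Prop) (F : Set S) (pre post : Set (Fin k → S))
    (f : (Fin k → S) → Finset (Fin k)) (hf : ∀ x, (f x).Nonempty)
    (hterm : ∀ s ∈ F, R s s ∧ ∀ t, R s t → t = s)
    (hfair : Fair R F f) :
    (∀ (π : Fin k → List S) (s t : Fin k → S),
        (∀ i, (π i).Chain' R ∧ (π i).head? = some (s i) ∧
          (π i).getLast? = some (t i) ∧ t i ∈ F) →
        s ∈ pre → t ∈ post) ↔
    (∀ (L : List (Fin k → S)) (s t : Fin k → S),
        L.Chain' (compStep R f) → L.head? = some s → L.getLast? = some t →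
        s ∈ pre → (∀ i, t i ∈ F) → t ∈ post) := by
  classical
  constructor
  · -- k-safety → composed safety
    intro h L s t hchain hhead hlast hs hF
    refine h (fun i => (L.map (fun x => x i)).destutter (· ≠ ·)) s t (fun i => ?_) hs
    refine ⟨?_, ?_, ?_, hF i⟩
    · refine ListAux.destutter_chain' R _ ?_
      unfold List.Chain'
      rw [List.isChain_map]
      refine List.IsChain.imp (fun a b hab => ?_) hchain
      by_cases hi : i ∈ f a
      · exact Or.inl (hab.1 i hi)
      · exact Or.inr (hab.2 i hi).symm
    · rw [ListAux.destutter_head?, List.head?_map, hhead]; rfl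
    · rw [ListAux.destutter_getLast?, List.getLast?_map, hlast]; rfl
  · -- composed safety → k-safety
    intro h π s t hπ hs
    obtain ⟨L, hLchain, hLproj⟩ :=
      hfair π (fun i => ⟨(hπ i).1, t i, (hπ i).2.2.1, (hπ i).2.2.2⟩)
    have hhead : ∀ i, L.head?.map (fun x => x i) = some (s i) := by
      intro i
      have := congrArg List.head? (hLproj i)
      rwa [ListAux.destutter_head?, ListAux.destutter_head?, List.head?_map,
        (hπ i).2.1] at this
    have hlast : ∀ i, L.getLast?.map (fun x => x i) = some (t i) := by
      intro i
      have := congrArg List.getLast? (hLproj i)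
      rwa [ListAux.destutter_getLast?, ListAux.destutter_getLast?, List.getLast?_map,
        (hπ i).2.2.1] at this
    obtain ⟨x, hx⟩ : ∃ x, L.head? = some x := by
      cases hL : L.head? with
      | none => have := hhead ⟨0, hk⟩; rw [hL] at this; simp at this
      | some x => exact ⟨x, rfl⟩
    obtain ⟨y, hy⟩ : ∃ y, L.getLast? = some y := by
      cases hL : L.getLast? with
      | none => have := hlast ⟨0, hk⟩; rw [hL] at this; simp at this
      | some y => exact ⟨y, rfl⟩
    have hxs : x = s := funext fun i => by have := hhead i; rw [hx] at this; simpa using this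
    have hyt : y = t := funext fun i => by have := hlast i; rw [hy] at this; simpa using this
    exact h L s t hLchain (hxs ▸ hx) (hyt ▸ hy) hs (fun i => (hπ i).2.2.2)
end

section
/- A composition function f satisfying the non-starvation condition — whenever f(s₁,…,s_k) = M and some s_i ∉ F, there exists j ∈ M with s_j ∉ F — is fair: for any k terminating executions of T there is an execution of T^f projecting onto all of them. -/
namespace List

theorem eq_replicate_of_isChain_cons {α : Type*} {R : α → α → Prop} {a : α} {l : List α}
    (hfix : ∀ b, R a b → b = a) (h : (a :: l).IsChain R) : l = replicate l.length a := by
  induction l with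
  | nil => rfl
  | cons b t ih =>
    obtain ⟨hab, hbt⟩ := isChain_cons_cons.1 h
    obtain rfl := hfix b hab
    rw [length_cons, replicate_succ, ← ih hbt]

section Destutter

variable {α : Type*} [DecidableRel (fun a b : α => a ≠ b)] {a : α} {l l₁ l₂ : List α}

theorem head?_destutter'_ne (a : α) (l : List α) : (l.destutter' (· ≠ ·) a).head? = some a := by
  induction l generalizing a with
  | nil => rfl
  | cons b t ih =>
    rw [destutter'_cons]
    split_ifs
    · rfl
    · exact ih a

theorem head?_destutter_ne : ∀ l : List α, (l.destutter (· ≠ ·)).head? = l.head?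
  | [] => rfl
  | b :: t => head?_destutter'_ne b t

theorem destutter_ne_cons_of_head?_eq (h : l.head? = some a) :
    (a :: l).destutter (· ≠ ·) = l.destutter (· ≠ ·) := by
  cases l with
  | nil => cases h
  | cons b t =>
    obtain rfl : b = a := Option.some.inj h
    rw [destutter_cons_cons, if_neg (not_not.2 rfl), destutter_cons']

theorem destutter_ne_cons_of_head?_ne (h : l.head? ≠ some a) :
    (a :: l).destutter (· ≠ ·) = a :: l.destutter (· ≠ ·) := by
  cases l with
  | nil => rfl
  | cons b t =>
    have hab : a ≠ b := fun hab => h (by rw [hab]; rfl)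
    rw [destutter_cons_cons, if_pos hab, destutter_cons']

theorem destutter_ne_cons_congr (h : l₁.destutter (· ≠ ·) = l₂.destutter (· ≠ ·)) :
    (a :: l₁).destutter (· ≠ ·) = (a :: l₂).destutter (· ≠ ·) := by
  have hhead : l₁.head? = l₂.head? := by
    rw [← head?_destutter_ne l₁, ← head?_destutter_ne l₂, h]
  by_cases ha : l₁.head? = some a
  · rw [destutter_ne_cons_of_head?_eq ha, destutter_ne_cons_of_head?_eq (hhead ▸ ha), h]
  · rw [destutter_ne_cons_of_head?_ne ha, destutter_ne_cons_of_head?_ne (hhead ▸ ha), h]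

theorem destutter_ne_cons_headD_tail (a : α) (l : List α) :
    (a :: l.headD a :: l.tail).destutter (· ≠ ·) = (a :: l).destutter (· ≠ ·) := by
  cases l with
  | nil => exact destutter_ne_cons_of_head?_eq rfl
  | cons b t => rfl

theorem destutter_ne_replicate_succ (a : α) (n : ℕ) :
    (replicate (n + 1) a).destutter (· ≠ ·) = [a] := by
  induction n with
  | zero => rfl
  | succ n ih => rw [replicate_succ, destutter_ne_cons_of_head?_eq rfl, ih]

end Destutter

end List

namespace Terminating

variable {S : Type*} {R : S → S → Prop} {F : Set S} {a : S} {l : List S}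

theorem mem_of_singleton (h : Terminating R F [a]) : a ∈ F := by
  obtain ⟨-, s, hs, hsF⟩ := h
  obtain rfl : a = s := Option.some.inj hs
  exact hsF

theorem ne_nil_of_not_mem (h : Terminating R F (a :: l)) (ha : a ∉ F) : l ≠ [] := by
  rintro rfl
  exact ha h.mem_of_singleton

theorem headD_tail (h : Terminating R F (a :: l)) : Terminating R F (l.headD a :: l.tail) := by
  cases l with
  | nil => exact h
  | cons b t =>
    obtain ⟨hchain, s, hs, hsF⟩ := h
    exact ⟨hchain.tail, s, by rwa [List.getLast?_cons_cons] at hs, hsF⟩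

theorem rel_headD (hloop : ∀ s ∈ F, R s s) (h : Terminating R F (a :: l)) : R a (l.headD a) := by
  cases l with
  | nil => exact hloop a h.mem_of_singleton
  | cons b t => exact (List.isChain_cons_cons.1 h.1).1

end Terminating

section Composition

variable {S : Type*} {k : ℕ} {R : S → S → Prop} {F : Set S} {f : (Fin k → S) → Finset (Fin k)}
  [DecidableRel (fun a b : S => a ≠ b)]

theorem exists_compStep_run_of_nonStarving (hterm : ∀ s ∈ F, R s s ∧ ∀ t, R s t → t = s)
    (hns : ∀ x : Fin k → S, (∃ i, x i ∉ F) → ∃ j ∈ f x, x j ∉ F)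
    (x : Fin k → S) (t : Fin k → List S) (ht : ∀ i, Terminating R F (x i :: t i)) :
    ∃ L : List (Fin k → S), (x :: L).IsChain (compStep R f) ∧
      (∀ i, (x :: L).getLast (List.cons_ne_nil x L) i ∈ F) ∧
      ∀ i, ((x :: L).map (· i)).destutter (· ≠ ·) = (x i :: t i).destutter (· ≠ ·) := by
  by_cases hall : ∀ i, x i ∈ F
  · refine ⟨[], List.isChain_singleton x, hall, fun i => ?_⟩
    rw [List.eq_replicate_of_isChain_cons (hterm _ (hall i)).2 (ht i).1, ← List.replicate_succ,
      List.destutter_ne_replicate_succ]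
    rfl
  obtain ⟨j, hj, hjF⟩ := hns x (not_forall.1 hall)
  let x' i := if i ∈ f x then (t i).headD (x i) else x i
  let t' i := if i ∈ f x then (t i).tail else t i
  have hstep : compStep R f x x' :=
    ⟨fun i hi => by simpa [x', hi] using (ht i).rel_headD fun s hs => (hterm s hs).1,
      fun i hi => if_neg hi⟩
  have ht' : ∀ i, Terminating R F (x' i :: t' i) := by
    intro i
    by_cases hi : i ∈ f x
    · simpa [x', t', hi] using (ht i).headD_tail
    · simpa [x', t', hi] using ht i
  -- the termination measure; `decreasing_by` finds `hdecr` in the context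
  have hdecr : ∑ i, (t' i).length < ∑ i, (t i).length := by
    refine Finset.sum_lt_sum (fun i _ => ?_) ⟨j, Finset.mem_univ j, ?_⟩
    · by_cases hi : i ∈ f x <;> simp [t', hi]
    · have := List.length_pos_iff.2 ((ht j).ne_nil_of_not_mem hjF)
      simp only [t', if_pos hj, List.length_tail]
      omega
  obtain ⟨L, hchain, hlast, hproj⟩ := exists_compStep_run_of_nonStarving hterm hns x' t' ht'
  refine ⟨x' :: L, List.isChain_cons_cons.2 ⟨hstep, hchain⟩, by simpa using hlast, fun i => ?_⟩
  rw [List.map_cons, List.destutter_ne_cons_congr (hproj i)]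
  by_cases hi : i ∈ f x
  · simpa [x', t', hi] using List.destutter_ne_cons_headD_tail (x i) (t i)
  · simpa [x', t', hi] using List.destutter_ne_cons_of_head?_eq rfl
termination_by ∑ i, (t i).length

end Composition

open Classical in
theorem nonStarving_implies_fair_general {S : Type*} {k : ℕ} (R : S → S → Prop) (F : Set S)
    (f : (Fin k → S) → Finset (Fin k))
    (hterm : ∀ s ∈ F, R s s ∧ ∀ t, R s t → t = s)
    (hns : ∀ x : Fin k → S, (∃ i, x i ∉ F) → ∃ j ∈ f x, x j ∉ F) :
    ∀ π : Fin k → List S, (∀ i, Terminating R F (π i)) →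
      ∃ L : List (Fin k → S), L.Chain' (compStep R f) ∧
        (∃ xt : Fin k → S, L.getLast? = some xt ∧ ∀ i, xt i ∈ F) ∧
        ∀ i, (L.map (fun x => x i)).destutter (· ≠ ·) = (π i).destutter (· ≠ ·) := by
  intro π hπ
  have hne : ∀ i, ∃ a t, π i = a :: t := fun i =>
    List.exists_cons_of_ne_nil fun h => by simpa [h, Terminating] using hπ i
  choose x t hxt using hne
  obtain ⟨L, hchain, hlast, hproj⟩ :=
    exists_compStep_run_of_nonStarving hterm hns x t fun i => hxt i ▸ hπ i
  refine ⟨x :: L, hchain, ⟨_, List.getLast?_eq_some_getLast _, hlast⟩, fun i => ?_⟩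
  rw [hproj i, hxt i]

open Classical in
/-- A composition function `f` satisfying the non-starvation condition
(whenever some copy is non-terminal, `f` schedules some non-terminal copy) is fair:
for any `k` terminating executions of `T` there is a terminating execution of `T^f`
projecting (up to stuttering of terminated copies) onto all of them.  Here every
terminal state of `T` has exactly one outgoing transition, a self-loop. -/
theorem nonStarving_implies_fair {S : Type*} {k : ℕ} (R : S → S → Prop) (F : Set S)
    (f : (Fin k → S) → Finset (Fin k)) (hf : ∀ x, (f x).Nonempty)
    (hterm : ∀ s ∈ F, R s s ∧ ∀ t, R s t → t = s)
    (hns : ∀ x : Fin k → S, (∃ i, x i ∉ F) → ∃ j ∈ f x, x j ∉ F) :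
    ∀ π : Fin k → List S, (∀ i, Terminating R F (π i)) →
      ∃ L : List (Fin k → S), L.Chain' (compStep R f) ∧
        (∃ xt : Fin k → S, L.getLast? = some xt ∧ ∀ i, xt i ∈ F) ∧
        ∀ i, (L.map (fun x => x i)).destutter (· ≠ ·) = (π i).destutter (· ≠ ·) :=
  nonStarving_implies_fair_general R F f hterm hns
end

section
/- There exists a non-fair composition function f and a transition system T with a k-safety property (pre, post) such that T^f satisfies (pre, post) vacuously but T does not satisfy (pre, post) as a k-safety property. Concretely, the constant function f ≡ {1} applied to a system whose copy 1 never terminates makes T^f reach no terminal composed state. -/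
open Classical in
lemma destutter'_of_chain_eq {α : Type*} :
    ∀ (l : List α) (a : α), l.Chain Eq a → l.destutter' (· ≠ ·) a = [a]
  | [], a, _ => rfl
  | b :: l, a, h => by
    rcases List.chain_cons.mp h with ⟨rfl, hl⟩
    rw [List.destutter'_cons_neg _ (by simp)]
    exact destutter'_of_chain_eq l a hl

open Classical in
lemma destutter_of_chain'_eq {α : Type*} (l : List α)
    (h : l.Chain' Eq) : (l.destutter (· ≠ ·)).length ≤ 1 := by
  cases l with
  | nil => simp [List.destutter_nil]
  | cons a l =>
    rw [List.destutter_cons', destutter'_of_chain_eq l a h]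
    simp

open Classical in
lemma pair_destutter {α : Type*} (a b : α) (hab : a ≠ b) :
    ([a, b] : List α).destutter (· ≠ ·) = [a, b] :=
  List.destutter_of_isChain _ _ (by simp [List.isChain_cons_cons, hab])

/-- There is a transition system `T` (with terminal states having only
self-loops) and a 2-safety property `(pre, post)` such that the constant (non-fair)
composition function `f ≡ {1}` makes `T^f` satisfy `(pre, post)` vacuously (no
reachable terminal composed state), while `T` does not satisfy `(pre, post)` as a
2-safety property. -/
theorem nonfair_composition_unsound :
    ∃ (S : Type) (R : S → S → Prop) (F : Set S) (pre post : Set (Fin 2 → S)),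
      (∀ s ∈ F, R s s ∧ ∀ t, R s t → t = s) ∧
      ¬ Fair R F (fun _ : Fin 2 → S => ({0} : Finset (Fin 2))) ∧
      (∀ x y : Fin 2 → S, x ∈ pre →
        Relation.ReflTransGen (compStep R (fun _ => ({0} : Finset (Fin 2)))) x y →
        (∀ i, y i ∈ F) → y ∈ post) ∧
      ¬ (∀ (π : Fin 2 → List S) (s t : Fin 2 → S),
          (∀ i, (π i).Chain' R ∧ (π i).head? = some (s i) ∧
            (π i).getLast? = some (t i) ∧ t i ∈ F) →
          s ∈ pre → t ∈ post) := by
  refine ⟨Bool, fun _ b => b = true, {true}, {x | x 1 = false}, ∅, ?_, ?_, ?_, ?_⟩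
  · rintro s rfl
    exact ⟨rfl, fun t ht => ht⟩
  · intro hfair
    obtain ⟨L, hL, hd⟩ := hfair (fun _ => [false, true])
      (fun i => ⟨by simp [List.Chain', List.isChain_cons_cons], true, by simp, rfl⟩)
    have h1 := hd 1
    have hchain : (L.map (fun x => x 1)).Chain' Eq := by
      rw [List.Chain', List.isChain_map]
      exact List.IsChain.imp (fun a b hab => (hab.2 1 (show (1:Fin 2) ∉ ({0}:Finset (Fin 2)) by decide)).symm) hL
    have hlen := destutter_of_chain'_eq _ hchain
    rw [h1] at hlen
    rw [pair_destutter false true (by simp)] at hlen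
    simp at hlen
  · intro x y hx hxy hy
    have h1 : y 1 = false := by
      clear hy
      induction hxy with
      | refl => exact hx
      | tail _ hstep ih => rw [hstep.2 1 (show (1:Fin 2) ∉ ({0}:Finset (Fin 2)) by decide), ih]
    have := hy 1
    rw [h1] at this
    exact absurd this (by simp)
  · intro h
    exact h (fun _ => [false, true]) (fun _ => false) (fun _ => true)
      (fun i => ⟨by simp [List.Chain', List.isChain_cons_cons], by simp, by simp, rfl⟩)
      rfl
end

section
/- If (f, Inv) is a composition-invariant pair for T and the k-safety property (pre, post), then T satisfies (pre, post). -/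
/-!
Fix a `k`-tuple of terminating executions from `s ∈ pre` to `t ∈ F × ⋯ × F` and record, as
ghost state, how many steps each copy still has to take along its execution. From a state
`x ∈ Inv` that is not yet terminal, coverage gives a condition `C M` holding at `x`; moving every
copy in `M` one step along its execution (terminal copies take their self-loop) stays in `Inv`,
no remaining count grows, and by fairness some copy in `M` is non-terminal, so its count drops.
Well-founded induction on the vector of counts thus reaches `t` inside `Inv`, where safety
gives `t ∈ post`.
-/

inductive NSteps {S : Type*} (R : S → S → Prop) : ℕ → S → S → Prop
  | refl (a : S) : NSteps R 0 a a
  | head {a b c : S} {n : ℕ} : R a b → NSteps R n b c → NSteps R (n + 1) a c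

namespace NSteps

variable {S : Type*} {R : S → S → Prop} {F : Set S} {n : ℕ} {a b : S}

theorem _root_.Relation.ReflTransGen.exists_nSteps (h : Relation.ReflTransGen R a b) :
    ∃ n, NSteps R n a b := by
  induction h using Relation.ReflTransGen.head_induction_on with
  | refl => exact ⟨0, .refl b⟩
  | head hac _ ih =>
    obtain ⟨n, hn⟩ := ih
    exact ⟨n + 1, .head hac hn⟩

theorem eq_of_mem (hstuck : ∀ s ∈ F, ∀ t, R s t → t = s) (h : NSteps R n a b) (ha : a ∈ F) :
    b = a := by
  induction h with
  | refl => rfl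
  | head hab _ ih =>
    obtain rfl := hstuck _ ha _ hab
    exact ih ha

theorem exists_step (hloop : ∀ s ∈ F, R s s) (h : NSteps R n a b) (hb : b ∈ F) :
    ∃ c m, R a c ∧ NSteps R m c b ∧ m ≤ n ∧ (a ∉ F → m < n) := by
  cases h with
  | refl => exact ⟨a, 0, hloop a hb, .refl a, le_rfl, fun ha => absurd hb ha⟩
  | @head _ c _ m hac hcb => exact ⟨c, m, hac, hcb, m.le_succ, fun _ => m.lt_succ_self⟩

end NSteps

theorem mem_post_of_forall_nSteps {S : Type*} {k : ℕ} {R : S → S → Prop} {F : Set S}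
    {post : Set (Fin k → S)} {C : Finset (Fin k) → Set (Fin k → S)} {Inv : Set (Fin k → S)}
    (hloop : ∀ s ∈ F, R s s) (hstuck : ∀ s ∈ F, ∀ t, R s t → t = s)
    (hcons : ∀ M : Finset (Fin k), M.Nonempty → ∀ x x' : Fin k → S,
      x ∈ Inv → x ∈ C M → (∀ i ∈ M, R (x i) (x' i)) → (∀ i ∉ M, x' i = x i) → x' ∈ Inv)
    (hsafe : ∀ x ∈ Inv, (∀ i, x i ∈ F) → x ∈ post)
    (hcov : ∀ x ∈ Inv, ∃ M : Finset (Fin k), M.Nonempty ∧ x ∈ C M)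
    (hfair : ∀ (M : Finset (Fin k)) (x : Fin k → S), x ∈ C M →
      (∃ i, x i ∉ F) → ∃ j ∈ M, x j ∉ F)
    {t : Fin k → S} (ht : ∀ i, t i ∈ F) (n : Fin k → ℕ) (x : Fin k → S) (hx : x ∈ Inv)
    (hsteps : ∀ i, NSteps R (n i) (x i) (t i)) : t ∈ post := by
  induction n using WellFoundedLT.induction generalizing x with
  | _ n ih =>
  by_cases hterminal : ∀ i, x i ∈ F
  · obtain rfl : t = x := funext fun i => (hsteps i).eq_of_mem hstuck (hterminal i)
    exact hsafe t hx hterminal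
  push Not at hterminal
  obtain ⟨M, hM, hxM⟩ := hcov x hx
  obtain ⟨j, hjM, hj⟩ := hfair M x hxM hterminal
  choose c m hstep hc hle hlt using fun i => (hsteps i).exists_step hloop (ht i)
  have hcount : M.piecewise m n < n := by
    refine Pi.lt_def.2 ⟨M.piecewise_le_of_le_of_le hle le_rfl, j, ?_⟩
    rw [M.piecewise_eq_of_mem _ _ hjM]
    exact hlt j hj
  refine ih _ hcount (M.piecewise c x) ?_ fun i => ?_
  · refine hcons M hM x _ hx hxM (fun i hi => ?_) fun i hi => M.piecewise_eq_of_notMem _ _ hi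
    rw [M.piecewise_eq_of_mem _ _ hi]
    exact hstep i
  · by_cases hi : i ∈ M
    · simpa only [M.piecewise_eq_of_mem _ _ hi] using hc i
    · simpa only [M.piecewise_eq_of_notMem _ _ hi] using hsteps i

/-- If `(f, Inv)` (with `f` given by conditions `C_M`) is a
composition-invariant pair for `T` and the `k`-safety property `(pre, post)`,
then `T` satisfies `(pre, post)`: every `k`-tuple of terminating executions starting
in `pre` ends in `post`. -/
theorem composition_invariant_pair_sound {S : Type*} {k : ℕ}
    (R : S → S → Prop) (F : Set S) (pre post : Set (Fin k → S))
    (C : Finset (Fin k) → Set (Fin k → S)) (Inv : Set (Fin k → S))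
    (hterm : ∀ s ∈ F, R s s ∧ ∀ t, R s t → t = s)
    (hinit : pre ⊆ Inv)
    (hcons : ∀ M : Finset (Fin k), M.Nonempty → ∀ x x' : Fin k → S,
      x ∈ Inv → x ∈ C M → (∀ i ∈ M, R (x i) (x' i)) → (∀ i ∉ M, x' i = x i) →
      x' ∈ Inv)
    (hsafe : ∀ x ∈ Inv, (∀ i, x i ∈ F) → x ∈ post)
    (hcov : ∀ x ∈ Inv, ∃ M : Finset (Fin k), M.Nonempty ∧ x ∈ C M)
    (hfair : ∀ (M : Finset (Fin k)) (x : Fin k → S), x ∈ C M →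
      (∃ i, x i ∉ F) → ∃ j ∈ M, x j ∉ F) :
    ∀ s t : Fin k → S, s ∈ pre →
      (∀ i, Relation.ReflTransGen R (s i) (t i) ∧ t i ∈ F) → t ∈ post := by
  intro s t hs ht
  choose n hn using fun i => (ht i).1.exists_nSteps
  exact mem_post_of_forall_nSteps (fun s hs => (hterm s hs).1) (fun s hs => (hterm s hs).2)
    hcons hsafe hcov hfair (fun i => (ht i).2) n s (hinit hs) hn
end

section
/- Conversely, if T satisfies the k-safety property (pre, post), then there exists a composition-invariant pair (f, Inv) for T and (pre, post) (with no restriction on the language of f and Inv). In particular one may take f to be the lock-step composition C_{1..k} = true and Inv the set of composed states reachable from pre in the lock-step composed system. -/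
theorem Relation.ReflTransGen.apply_of_pi {ι S : Type*} {R : S → S → Prop} {s x : ι → S}
    (h : Relation.ReflTransGen (fun y y' : ι → S => ∀ i, R (y i) (y' i)) s x) (i : ι) :
    Relation.ReflTransGen R (s i) (x i) :=
  h.lift (· i) fun _ _ hstep => hstep i

theorem Set.of_mem_ite_univ_empty {α : Type*} {p : Prop} [Decidable p] {x : α}
    (h : x ∈ (if p then Set.univ else ∅ : Set α)) : p :=
  ((Set.mem_ite_empty_right p _ x).1 h).1

theorem composition_invariant_pair_complete_general {S : Type*} {k : ℕ} (hk : 0 < k)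
    (R : S → S → Prop) (F : Set S) (pre post : Set (Fin k → S))
    (hksafe : ∀ s t : Fin k → S, s ∈ pre →
      (∀ i, Relation.ReflTransGen R (s i) (t i) ∧ t i ∈ F) → t ∈ post) :
    let C : Finset (Fin k) → Set (Fin k → S) :=
      fun M => if M = Finset.univ then Set.univ else ∅
    let lockStep : (Fin k → S) → (Fin k → S) → Prop :=
      fun x x' => ∀ i, R (x i) (x' i)
    let Inv : Set (Fin k → S) :=
      {x | ∃ s ∈ pre, Relation.ReflTransGen lockStep s x}
    (pre ⊆ Inv) ∧
    (∀ M : Finset (Fin k), M.Nonempty → ∀ x x' : Fin k → S,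
      x ∈ Inv → x ∈ C M → (∀ i ∈ M, R (x i) (x' i)) → (∀ i ∉ M, x' i = x i) →
      x' ∈ Inv) ∧
    (∀ x ∈ Inv, (∀ i, x i ∈ F) → x ∈ post) ∧
    (∀ x ∈ Inv, ∃ M : Finset (Fin k), M.Nonempty ∧ x ∈ C M) ∧
    (∀ (M : Finset (Fin k)) (x : Fin k → S), x ∈ C M →
      (∃ i, x i ∉ F) → ∃ j ∈ M, x j ∉ F) := by
  intro C lockStep Inv
  refine ⟨fun s hs => ⟨s, hs, .refl⟩, ?closed, ?post, ?covered, ?fair⟩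
  case closed =>
    rintro M - x x' ⟨s, hs, hreach⟩ hxC hstep -
    obtain rfl := Set.of_mem_ite_univ_empty hxC
    exact ⟨s, hs, hreach.tail fun i => hstep i (Finset.mem_univ i)⟩
  case post =>
    rintro x ⟨s, hs, hreach⟩ hF
    exact hksafe s x hs fun i => ⟨hreach.apply_of_pi i, hF i⟩
  case covered =>
    have : Nonempty (Fin k) := Fin.pos_iff_nonempty.mp hk
    exact fun _ _ => ⟨Finset.univ, Finset.univ_nonempty, by simp [C]⟩
  case fair =>
    rintro M x hxC ⟨i, hi⟩
    obtain rfl := Set.of_mem_ite_univ_empty hxC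
    exact ⟨i, Finset.mem_univ i, hi⟩

/-- If `T` satisfies the `k`-safety property `(pre, post)`, then a
composition-invariant pair exists; in particular, lock-step composition
(`C_{1..k} = true`, all other conditions `false`) together with the set of composed
states reachable from `pre` in the lock-step composed system forms such a pair. -/
theorem composition_invariant_pair_complete {S : Type*} {k : ℕ} (hk : 0 < k)
    (R : S → S → Prop) (F : Set S) (pre post : Set (Fin k → S))
    (hterm : ∀ s ∈ F, R s s ∧ ∀ t, R s t → t = s)
    (hksafe : ∀ s t : Fin k → S, s ∈ pre →
      (∀ i, Relation.ReflTransGen R (s i) (t i) ∧ t i ∈ F) → t ∈ post) :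
    let C : Finset (Fin k) → Set (Fin k → S) :=
      fun M => if M = Finset.univ then Set.univ else ∅
    let lockStep : (Fin k → S) → (Fin k → S) → Prop :=
      fun x x' => ∀ i, R (x i) (x' i)
    let Inv : Set (Fin k → S) :=
      {x | ∃ s ∈ pre, Relation.ReflTransGen lockStep s x}
    (pre ⊆ Inv) ∧
    (∀ M : Finset (Fin k), M.Nonempty → ∀ x x' : Fin k → S,
      x ∈ Inv → x ∈ C M → (∀ i ∈ M, R (x i) (x' i)) → (∀ i ∉ M, x' i = x i) →
      x' ∈ Inv) ∧
    (∀ x ∈ Inv, (∀ i, x i ∈ F) → x ∈ post) ∧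
    (∀ x ∈ Inv, ∃ M : Finset (Fin k), M.Nonempty ∧ x ∈ C M) ∧
    (∀ (M : Finset (Fin k)) (x : Fin k → S), x ∈ C M →
      (∃ i, x i ∉ F) → ∃ j ∈ M, x j ∉ F) :=
  composition_invariant_pair_complete_general hk R F pre post hksafe
end

section
/- Let α : S^k → 2^P be the abstraction mapping a composed state to the set of predicates it satisfies, for a finite predicate set P. Then a composed system T^f has an inductive invariant expressible as a Boolean combination of predicates in P if and only if its predicate abstraction is safe, i.e., no abstract state reachable (via the abstract transition relation) from the abstraction of pre violates the abstract post-condition; here pre, post, and the conditions defining f are assumed expressible as Boolean combinations of P (adequacy). -/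
/-!
An inductive invariant in `L(P)` is the `α`-preimage of a set of valuations. Such a set is
closed under concrete steps exactly when it is closed under abstract steps, because membership
in a preimage depends on a state only through its valuation. Hence every such invariant contains
all abstract states reachable from `α(pre)`, and conversely the reachable abstract states
themselves form an invariant; adequacy of `post` and the terminal conditions lets safety be
read off the valuation.
-/

/-- The abstraction function mapping a composed state to the valuation of the
predicates it satisfies. -/
def alphaMap {X ι : Type*} (pred : ι → Set X) (x : X) : ι → Prop :=
  fun i => x ∈ pred i

/-- The abstract (existential) transition relation induced by predicate abstraction. -/
def absTrans {X ι : Type*} (pred : ι → Set X) (Tc : X → X → Prop)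
    (v₁ v₂ : ι → Prop) : Prop :=
  ∃ x₁ x₂, alphaMap pred x₁ = v₁ ∧ alphaMap pred x₂ = v₂ ∧ Tc x₁ x₂

section PredicateAbstraction

variable {X ι : Type*}

def IsInductiveInvariant (Tc : X → X → Prop) (Init Safe Inv : Set X) : Prop :=
  Init ⊆ Inv ∧ (∀ x x', x ∈ Inv → Tc x x' → x' ∈ Inv) ∧ Inv ⊆ Safe

variable (pred : ι → Set X) (Tc : X → X → Prop)

def absReach (Init : Set X) : Set (ι → Prop) :=
  {v | ∃ x₀ ∈ Init, Relation.ReflTransGen (absTrans pred Tc) (alphaMap pred x₀) v}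

variable {pred Tc}

theorem mem_range_of_reflTransGen_absTrans {x : X} {v : ι → Prop}
    (h : Relation.ReflTransGen (absTrans pred Tc) (alphaMap pred x) v) :
    v ∈ Set.range (alphaMap pred) := by
  rcases h.cases_tail with rfl | ⟨_, _, _, x₂, _, rfl, _⟩
  exacts [⟨x, rfl⟩, ⟨x₂, rfl⟩]

theorem mem_of_reflTransGen_absTrans {InvA : Set (ι → Prop)}
    (hind : ∀ x x', x ∈ alphaMap pred ⁻¹' InvA → Tc x x' → x' ∈ alphaMap pred ⁻¹' InvA)
    {v w : ι → Prop} (h : Relation.ReflTransGen (absTrans pred Tc) v w) (hv : v ∈ InvA) :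
    w ∈ InvA := by
  induction h with
  | refl => exact hv
  | tail _ step ih =>
    obtain ⟨x₁, x₂, rfl, rfl, hstep⟩ := step
    exact hind x₁ x₂ ih hstep

theorem subset_preimage_absReach (Init : Set X) :
    Init ⊆ alphaMap pred ⁻¹' absReach pred Tc Init :=
  fun x hx => ⟨x, hx, .refl⟩

theorem preimage_absReach_closed {Init : Set X} {x x' : X}
    (hx : x ∈ alphaMap pred ⁻¹' absReach pred Tc Init) (hstep : Tc x x') :
    x' ∈ alphaMap pred ⁻¹' absReach pred Tc Init := by
  obtain ⟨x₀, hx₀, hreach⟩ := hx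
  exact ⟨x₀, hx₀, hreach.tail ⟨x, x', rfl, rfl, hstep⟩⟩

theorem exists_isInductiveInvariant_preimage_iff {Init Safe : Set X} {SafeA : Set (ι → Prop)}
    (hSafe : Safe = alphaMap pred ⁻¹' SafeA) :
    (∃ InvA : Set (ι → Prop), IsInductiveInvariant Tc Init Safe (alphaMap pred ⁻¹' InvA)) ↔
      ∀ (x₀ : X) (v : ι → Prop), x₀ ∈ Init →
        Relation.ReflTransGen (absTrans pred Tc) (alphaMap pred x₀) v → v ∈ SafeA := by
  subst hSafe
  constructor
  · rintro ⟨InvA, hinit, hind, hsafe⟩ x₀ v hx₀ hreach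
    obtain ⟨x, rfl⟩ := mem_range_of_reflTransGen_absTrans hreach
    exact hsafe (mem_of_reflTransGen_absTrans hind hreach (hinit hx₀))
  · intro hsafe
    refine ⟨absReach pred Tc Init, subset_preimage_absReach Init,
      fun _ _ => preimage_absReach_closed, ?_⟩
    rintro x ⟨x₀, hx₀, hreach⟩
    exact hsafe x₀ _ hx₀ hreach

end PredicateAbstraction

theorem invariant_in_lang_iff_abstraction_safe_general {S : Type*} {k : ℕ} {ι : Type*}
    (pred : ι → Set (Fin k → S)) (R : S → S → Prop) (F : Set S)
    (f : (Fin k → S) → Finset (Fin k)) (pre post : Set (Fin k → S))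
    (postA : Set (ι → Prop)) (FA : Fin k → Set (ι → Prop))
    (hpost : post = alphaMap pred ⁻¹' postA)
    (hF : ∀ i : Fin k, {x : Fin k → S | x i ∈ F} = alphaMap pred ⁻¹' FA i) :
    (∃ InvA : Set (ι → Prop),
      pre ⊆ alphaMap pred ⁻¹' InvA ∧
      (∀ x x' : Fin k → S, x ∈ alphaMap pred ⁻¹' InvA → compStep R f x x' →
        x' ∈ alphaMap pred ⁻¹' InvA) ∧
      (∀ x ∈ alphaMap pred ⁻¹' InvA, (∀ i, x i ∈ F) → x ∈ post)) ↔
    (∀ (x₀ : Fin k → S) (v : ι → Prop), x₀ ∈ pre →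
      Relation.ReflTransGen (absTrans pred (compStep R f)) (alphaMap pred x₀) v →
      (∀ i, v ∈ FA i) → v ∈ postA) := by
  have hSafe : {x | (∀ i, x i ∈ F) → x ∈ post} =
      alphaMap pred ⁻¹' {v | (∀ i, v ∈ FA i) → v ∈ postA} := by
    ext x
    have hFx (i : Fin k) : x i ∈ F ↔ alphaMap pred x ∈ FA i := Set.ext_iff.mp (hF i) x
    simp only [Set.mem_ofPred_eq, Set.mem_preimage, hpost, hFx]
  exact exists_isInductiveInvariant_preimage_iff hSafe

/-- Assuming adequacy (`pre`, `post`, each terminal condition `F^i`, and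
the conditions defining `f` are expressible as Boolean combinations of the finite
predicate set `P`, i.e. as `α`-preimages of abstract sets), the composed system `T^f`
has an inductive invariant expressible over `P` iff its predicate abstraction is safe:
no abstract state reachable from the abstraction of `pre` via the abstract transition
relation violates the abstract post-condition. -/
theorem invariant_in_lang_iff_abstraction_safe {S : Type*} {k : ℕ} {ι : Type*}
    [Fintype ι] (pred : ι → Set (Fin k → S)) (R : S → S → Prop) (F : Set S)
    (f : (Fin k → S) → Finset (Fin k)) (pre post : Set (Fin k → S))
    (preA postA : Set (ι → Prop)) (FA : Fin k → Set (ι → Prop))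
    (fA : Finset (Fin k) → Set (ι → Prop))
    (hpre : pre = alphaMap pred ⁻¹' preA)
    (hpost : post = alphaMap pred ⁻¹' postA)
    (hF : ∀ i : Fin k, {x : Fin k → S | x i ∈ F} = alphaMap pred ⁻¹' FA i)
    (hf : ∀ M : Finset (Fin k), {x : Fin k → S | f x = M} = alphaMap pred ⁻¹' fA M) :
    (∃ InvA : Set (ι → Prop),
      pre ⊆ alphaMap pred ⁻¹' InvA ∧
      (∀ x x' : Fin k → S, x ∈ alphaMap pred ⁻¹' InvA → compStep R f x x' →
        x' ∈ alphaMap pred ⁻¹' InvA) ∧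
      (∀ x ∈ alphaMap pred ⁻¹' InvA, (∀ i, x i ∈ F) → x ∈ post)) ↔
    (∀ (x₀ : Fin k → S) (v : ι → Prop), x₀ ∈ pre →
      Relation.ReflTransGen (absTrans pred (compStep R f)) (alphaMap pred x₀) v →
      (∀ i, v ∈ FA i) → v ∈ postA) :=
  invariant_in_lang_iff_abstraction_safe_general pred R F f pre post postA FA hpost hF
end

section
/- If a formula ψ is a Boolean combination of predicates in P and induces the set A ⊆ S^k, then γ applied to the set of abstract states satisfying the Booleanized ψ equals exactly A (no precision loss for sets definable in L(P)). -/
/-- Boolean combinations of predicates indexed by `ι` (the language `L(P)`). -/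
inductive PForm (ι : Type*) where
  | pred : ι → PForm ι
  | conj : PForm ι → PForm ι → PForm ι
  | disj : PForm ι → PForm ι → PForm ι
  | neg  : PForm ι → PForm ι

/-- Concrete semantics of a formula in `L(P)`. -/
def cEval {X ι : Type*} (pred : ι → Set X) : PForm ι → X → Prop
  | .pred i, x => x ∈ pred i
  | .conj φ ψ, x => cEval pred φ x ∧ cEval pred ψ x
  | .disj φ ψ, x => cEval pred φ x ∨ cEval pred ψ x
  | .neg φ, x => ¬ cEval pred φ x

/-- Abstract (Booleanized) semantics of a formula in `L(P)`. -/
def aEval {ι : Type*} : PForm ι → (ι → Bool) → Prop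
  | .pred i, v => v i = true
  | .conj φ ψ, v => aEval φ v ∧ aEval ψ v
  | .disj φ ψ, v => aEval φ v ∨ aEval ψ v
  | .neg φ, v => ¬ aEval φ v

noncomputable def abstraction {X ι : Type*} (pred : ι → Set X) (x : X) : ι → Bool :=
  open Classical in fun i => decide (x ∈ pred i)

lemma agree_iff_eq_abstraction {X ι : Type*} (pred : ι → Set X) (x : X) (v : ι → Bool) :
    (∀ i, x ∈ pred i ↔ v i = true) ↔ v = abstraction pred x := by
  rw [funext_iff]
  refine forall_congr' fun i => ?_
  cases v i <;> simp [abstraction]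

lemma aEval_abstraction_iff {X ι : Type*} (pred : ι → Set X) (ψ : PForm ι) (x : X) :
    aEval ψ (abstraction pred x) ↔ cEval pred ψ x := by
  induction ψ <;> simp_all [aEval, cEval, abstraction]

/-- If a formula `ψ ∈ L(P)` induces the set `A` of concrete states, then
`γ` applied to the set of abstract states satisfying the Booleanized `ψ` (i.e. the
union of their concretizations) equals exactly `A`: no precision loss for sets
definable in `L(P)`. -/
theorem gamma_of_booleanized_eq {X ι : Type*} (pred : ι → Set X) (ψ : PForm ι)
    (A : Set X) (hA : A = {x | cEval pred ψ x}) :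
    {x : X | ∃ v : ι → Bool, aEval ψ v ∧ ∀ i, x ∈ pred i ↔ v i = true} = A := by
  subst hA
  ext x
  simp only [Set.mem_ofPred_eq, agree_iff_eq_abstraction, exists_eq_right, aEval_abstraction_iff]
end

section
/- For the 2-safety reduction in the undecidability proof: if T has an inductive invariant Inv for (pre, post), then the pair consisting of the lock-step composition and the composed invariant Inv* = b¹ ∧ Inv(V¹) ∧ ¬b² ∧ ⋀_v (v² = a_v) is a composition-invariant pair for the augmented system T* and the 2-safety property (pre*, post*); conversely, from any composition-invariant pair (f, Inv*) for T* one obtains an inductive invariant for T and (pre, post) by substituting b² ↦ false and v² ↦ a_v in Inv*. -/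
/-!
Forward direction: with lock-step scheduling the second copy of `T*` sits forever in the
sink state `(a, false)`, so `Inv*` is just `Inv` on the first copy, and each obligation of
a composition-invariant pair reduces to the corresponding one for `Inv`.

Backward direction: in the state `((s, true), (a, false))` the second copy is terminal and
can only stutter, so fairness forces every admissible schedule to move the first copy;
hence consecution of the pair yields consecution of the substituted invariant along `R`.
Terminal states of `T` have no other successor, which covers the case `s ∈ F`.
-/

open Finset

section CompositionInvariant

variable {ι σ : Type*}

structure IsInductiveInvariant_s15 (R : σ → σ → Prop) (F pre post Inv : Set σ) : Prop where
  initiation : pre ⊆ Inv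
  consecution : ∀ s s', s ∈ Inv → R s s' → s' ∈ Inv
  safety : ∀ s ∈ Inv, s ∈ F → s ∈ post

/-- `C M` is the condition under which the copies in `M` take a step together. -/
structure IsCompositionInvariantPair (R : σ → σ → Prop) (F : Set σ) (pre post : Set (ι → σ))
    (C : Finset ι → Set (ι → σ)) (I : Set (ι → σ)) : Prop where
  initiation : pre ⊆ I
  consecution : ∀ M : Finset ι, M.Nonempty → ∀ x x' : ι → σ,
    x ∈ I → x ∈ C M → (∀ i ∈ M, R (x i) (x' i)) → (∀ i ∉ M, x' i = x i) → x' ∈ I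
  safety : ∀ x ∈ I, (∀ i, x i ∈ F) → x ∈ post
  covering : ∀ x ∈ I, ∃ M : Finset ι, M.Nonempty ∧ x ∈ C M
  fairness : ∀ (M : Finset ι) (x : ι → σ), x ∈ C M → (∃ i, x i ∉ F) → ∃ j ∈ M, x j ∉ F

/-- Fairness forces every schedule enabled at `x` to include the only non-terminal copy `i`. -/
theorem IsCompositionInvariantPair.update_mem [DecidableEq ι] {R : σ → σ → Prop} {F : Set σ}
    {pre post : Set (ι → σ)} {C : Finset ι → Set (ι → σ)} {I : Set (ι → σ)}
    (h : IsCompositionInvariantPair R F pre post C I) {x : ι → σ} (hx : x ∈ I) {i : ι}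
    (hi : x i ∉ F) (hrest : ∀ j ≠ i, x j ∈ F ∧ R (x j) (x j)) {y : σ} (hy : R (x i) y) :
    Function.update x i y ∈ I := by
  obtain ⟨M, hMne, hxM⟩ := h.covering x hx
  obtain ⟨j, hjM, hjF⟩ := h.fairness M x hxM ⟨i, hi⟩
  have hji : j = i := by_contra fun hne => hjF (hrest j hne).1
  subst hji
  refine h.consecution M hMne x _ hx hxM (fun k _ => ?_) (fun k hk => ?_)
  · by_cases hk : k = j
    · subst hk
      simpa using hy
    · simpa [hk] using (hrest k hk).2
  · exact Function.update_of_ne (ne_of_mem_of_not_mem hjM hk).symm _ _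

variable [Fintype ι] [DecidableEq ι]

def lockstep (M : Finset ι) : Set (ι → σ) := if M = univ then Set.univ else ∅

@[simp]
theorem mem_lockstep {M : Finset ι} {x : ι → σ} : x ∈ lockstep M ↔ M = univ := by
  by_cases h : M = univ <;> simp [lockstep, h]

theorem IsCompositionInvariantPair.of_lockstep [Nonempty ι] {R : σ → σ → Prop} {F : Set σ}
    {pre post I : Set (ι → σ)} (hinit : pre ⊆ I)
    (hcons : ∀ x x' : ι → σ, x ∈ I → (∀ i, R (x i) (x' i)) → x' ∈ I)
    (hsafe : ∀ x ∈ I, (∀ i, x i ∈ F) → x ∈ post) :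
    IsCompositionInvariantPair R F pre post lockstep I where
  initiation := hinit
  consecution M _ x x' hx hM hstep _ := by
    rw [mem_lockstep] at hM
    subst hM
    exact hcons x x' hx fun i => hstep i (mem_univ i)
  safety := hsafe
  covering _ _ := ⟨univ, univ_nonempty, mem_lockstep.2 rfl⟩
  fairness M _ hM := by
    rw [mem_lockstep] at hM
    subst hM
    exact fun ⟨i, hi⟩ => ⟨i, mem_univ i, hi⟩

end CompositionInvariant

section Augmentation

variable {S : Type*}

def augStep (R : S → S → Prop) (a : S) (p q : S × Bool) : Prop :=
  (p.2 = true ∧ R p.1 q.1 ∧ q.2 = true) ∨ (p.2 = false ∧ q.1 = a ∧ q.2 = false)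

def augTerminal (F : Set S) (a : S) : Set (S × Bool) := {p | p.1 ∈ F ∨ (p.2 = false ∧ p.1 = a)}

/-- The first copy runs `T` from `P`; the second is parked in the sink state `(a, false)`. -/
def pairLift (P : Set S) (a : S) : Set (Fin 2 → S × Bool) :=
  {x | (x 0).2 = true ∧ (x 0).1 ∈ P ∧ (x 1).2 = false ∧ (x 1).1 = a}

variable {R : S → S → Prop} {F pre post : Set S} {a : S}

theorem augStep_true_iff {s : S} {q : S × Bool} :
    augStep R a (s, true) q ↔ R s q.1 ∧ q.2 = true := by
  simp [augStep]

theorem augStep_false_iff {s : S} {q : S × Bool} : augStep R a (s, false) q ↔ q = (a, false) := by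
  simp [augStep, Prod.ext_iff]

theorem mem_pairLift_iff {P : Set S} {x : Fin 2 → S × Bool} :
    x ∈ pairLift P a ↔ ∃ s ∈ P, x = ![(s, true), (a, false)] := by
  constructor
  · rintro ⟨h0b, hs, h1b, h1a⟩
    refine ⟨(x 0).1, hs, funext fun i => ?_⟩
    fin_cases i <;> ext <;> simp [*]
  · rintro ⟨s, hs, rfl⟩
    simpa [pairLift] using hs

theorem vecCons_mem_pairLift_iff {P : Set S} {s : S} :
    ![(s, true), (a, false)] ∈ pairLift P a ↔ s ∈ P := by
  simp [pairLift]

theorem IsInductiveInvariant_s15.isCompositionInvariantPair_lockstep {Inv : Set S}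
    (h : IsInductiveInvariant_s15 R F pre post Inv) :
    IsCompositionInvariantPair (augStep R a) (augTerminal F a) (pairLift pre a) (pairLift post a)
      lockstep (pairLift Inv a) := by
  refine .of_lockstep ?_ ?_ ?_
  · rintro x ⟨h0b, hs, h1⟩
    exact ⟨h0b, h.initiation hs, h1⟩
  · intro x x' hx hstep
    obtain ⟨s, hs, rfl⟩ := mem_pairLift_iff.1 hx
    obtain ⟨hR, h0b⟩ := augStep_true_iff.1 (hstep 0)
    have h1 : x' 1 = (a, false) := augStep_false_iff.1 (hstep 1)
    exact ⟨h0b, h.consecution s _ hs hR, by simp [h1], by simp [h1]⟩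
  · rintro x ⟨h0b, hs, h1⟩ hterm
    have hF : (x 0).1 ∈ F := (hterm 0).resolve_right fun ⟨hb, _⟩ => by simp [h0b] at hb
    exact ⟨h0b, h.safety _ hs hF, h1⟩

theorem IsCompositionInvariantPair.isInductiveInvariant_subst
    {C : Finset (Fin 2) → Set (Fin 2 → S × Bool)} {I : Set (Fin 2 → S × Bool)}
    (h : IsCompositionInvariantPair (augStep R a) (augTerminal F a) (pairLift pre a)
      (pairLift post a) C I)
    (hterm : ∀ s ∈ F, ∀ t, R s t → t = s) :
    IsInductiveInvariant_s15 R F pre post {s | ![(s, true), (a, false)] ∈ I} where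
  initiation s hs := h.initiation (vecCons_mem_pairLift_iff.2 hs)
  consecution s s' hs hR := by
    by_cases hF : s ∈ F
    · rwa [hterm s hF s' hR]
    have hnext := h.update_mem hs (i := 0) (by simp [augTerminal, hF])
      (fun j hj => by fin_cases j <;> simp_all [augTerminal, augStep])
      (augStep_true_iff.2 ⟨hR, rfl⟩ : augStep R a _ (s', true))
    have hupdate : Function.update ![(s, true), (a, false)] 0 (s', true) =
        ![(s', true), (a, false)] :=
      Fin.update_cons_zero _ _ _
    rwa [hupdate] at hnext
  safety s hs hF := by
    refine vecCons_mem_pairLift_iff.1 (h.safety _ hs fun i => ?_)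
    fin_cases i <;> simp [augTerminal, hF]

end Augmentation

/-- The reduction used in the undecidability proof.  `T*` augments `T`
with a Boolean `b`; transitions are `(b ∧ R ∧ b') ∨ (¬b ∧ s' = a ∧ ¬b')`, terminal
states are `F ∨ (¬b ∧ s = a)`.  If `T` has an inductive invariant `Inv` for
`(pre, post)` then lock-step composition together with
`Inv* = b¹ ∧ Inv(V¹) ∧ ¬b² ∧ (V² = a)` is a composition-invariant pair for `T*` and
the 2-safety property `(pre*, post*)`; conversely, from any composition-invariant pair
`(C, I)` for `T*` one gets an inductive invariant for `T` and `(pre, post)` by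
substituting `b² ↦ false`, `V² ↦ a` (and `b¹ ↦ true`) in `I`. -/
theorem undecidability_reduction {S : Type*} (R : S → S → Prop)
    (F pre post : Set S) (a : S)
    (hterm : ∀ s ∈ F, R s s ∧ ∀ t, R s t → t = s) :
    let Rs : S × Bool → S × Bool → Prop := fun p q =>
      (p.2 = true ∧ R p.1 q.1 ∧ q.2 = true) ∨ (p.2 = false ∧ q.1 = a ∧ q.2 = false)
    let Fs : Set (S × Bool) := {p | p.1 ∈ F ∨ (p.2 = false ∧ p.1 = a)}
    let preS : Set (Fin 2 → S × Bool) :=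
      {x | (x 0).2 = true ∧ (x 0).1 ∈ pre ∧ (x 1).2 = false ∧ (x 1).1 = a}
    let postS : Set (Fin 2 → S × Bool) :=
      {x | (x 0).2 = true ∧ (x 0).1 ∈ post ∧ (x 1).2 = false ∧ (x 1).1 = a}
    let Pair : (Finset (Fin 2) → Set (Fin 2 → S × Bool)) → Set (Fin 2 → S × Bool) →
        Prop := fun C I =>
      preS ⊆ I ∧
      (∀ M : Finset (Fin 2), M.Nonempty → ∀ x x' : Fin 2 → S × Bool,
        x ∈ I → x ∈ C M → (∀ i ∈ M, Rs (x i) (x' i)) → (∀ i ∉ M, x' i = x i) →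
        x' ∈ I) ∧
      (∀ x ∈ I, (∀ i, x i ∈ Fs) → x ∈ postS) ∧
      (∀ x ∈ I, ∃ M : Finset (Fin 2), M.Nonempty ∧ x ∈ C M) ∧
      (∀ (M : Finset (Fin 2)) (x : Fin 2 → S × Bool), x ∈ C M →
        (∃ i, x i ∉ Fs) → ∃ j ∈ M, x j ∉ Fs)
    (∀ Inv : Set S,
      pre ⊆ Inv → (∀ s s', s ∈ Inv → R s s' → s' ∈ Inv) →
      (∀ s ∈ Inv, s ∈ F → s ∈ post) →
      Pair (fun M => if M = Finset.univ then Set.univ else ∅)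
        {x | (x 0).2 = true ∧ (x 0).1 ∈ Inv ∧ (x 1).2 = false ∧ (x 1).1 = a}) ∧
    (∀ (C : Finset (Fin 2) → Set (Fin 2 → S × Bool)) (I : Set (Fin 2 → S × Bool)),
      Pair C I →
      (pre ⊆ {s | (![(s, true), (a, false)] : Fin 2 → S × Bool) ∈ I}) ∧
      (∀ s s', s ∈ {s | (![(s, true), (a, false)] : Fin 2 → S × Bool) ∈ I} → R s s' →
        s' ∈ {s | (![(s, true), (a, false)] : Fin 2 → S × Bool) ∈ I}) ∧
      (∀ s ∈ {s | (![(s, true), (a, false)] : Fin 2 → S × Bool) ∈ I},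
        s ∈ F → s ∈ post)) := by
  intro Rs Fs preS postS Pair
  refine ⟨fun Inv hinit hcons hsafe => ?_, fun C I hP => ?_⟩
  · have h := (IsInductiveInvariant_s15.mk hinit hcons hsafe).isCompositionInvariantPair_lockstep
      (a := a)
    exact ⟨h.initiation, h.consecution, h.safety, h.covering, h.fairness⟩
  · obtain ⟨hinit, hcons, hsafe, hcov, hfair⟩ := hP
    have h := (IsCompositionInvariantPair.mk hinit hcons hsafe hcov hfair
      ).isInductiveInvariant_subst fun s hs => (hterm s hs).2
    exact ⟨h.initiation, h.consecution, h.safety⟩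
end

section
/- For the program doubleSquare composed with itself by synchronizing control structures (both loop bodies taken in parallel when both loop guards hold), no quantifier-free linear integer arithmetic formula over (x, y₁, z₁, y₂, z₂) is an inductive invariant establishing y₁ = y₂ at termination. Specifically: any finite disjunction of convex (LIA-cube-definable) sets containing all reachable loop-exit states of the form (n, n², n, n², 0) for even n must contain a midpoint state ((n+m)/2, (n²+m²)/2, (n+m)/2, (n²+m²)/2, 0) from which executing the loop yields y₁ = (n²+m²)/2 + ((n+m)/2)² ≠ (n²+m²)/2 = y₂, violating safety. -/
/-!
A set of integer points cut out by a conjunction of linear inequalities is closed under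
integer convex combinations, so a quantifier-free LIA invariant is a finite union of such sets.
By pigeonhole one of them contains two reachable states `(n, n², n, n², 0)` with `n ≠ m` even,
hence their integer midpoint `w`, which is not safe: there the first copy still has
`z₁ = (n + m) / 2 > 0` iterations to run and the second none.
-/

def IsIntConvex {σ : Type*} (S : Set (σ → ℤ)) : Prop :=
  ∀ u ∈ S, ∀ v ∈ S, ∀ p q : ℤ, 0 ≤ p → 0 ≤ q → 0 < p + q →
    ∀ w : σ → ℤ, (∀ i, (p + q) * w i = p * u i + q * v i) → w ∈ S

theorem IsIntConvex.mem_of_two_mul_eq_add {σ : Type*} {S : Set (σ → ℤ)} (hS : IsIntConvex S)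
    {u v w : σ → ℤ} (hu : u ∈ S) (hv : v ∈ S) (hw : ∀ i, 2 * w i = u i + v i) : w ∈ S :=
  hS u hu v hv 1 1 zero_le_one zero_le_one two_pos w fun i => by
    simpa [one_add_one_eq_two] using hw i

theorem exists_two_mul_eq_add_of_even {σ : Type*} {u v : σ → ℤ} (h : ∀ i, Even (u i + v i)) :
    ∃ w : σ → ℤ, ∀ i, 2 * w i = u i + v i :=
  ⟨fun i => (u i + v i) / 2, fun i => Int.two_mul_ediv_two_of_even (h i)⟩

theorem Finite.exists_ne_mem_of_forall_mem_iUnion {ι κ α : Type*} [Finite ι] [Infinite κ]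
    {D : ι → Set α} (s : κ → α) (hs : ∀ k, s k ∈ ⋃ j, D j) :
    ∃ j k l, k ≠ l ∧ s k ∈ D j ∧ s l ∈ D j := by
  choose g hg using fun k => Set.mem_iUnion.mp (hs k)
  obtain ⟨k, l, hkl, hg_eq⟩ := Finite.exists_ne_map_eq_of_infinite g
  exact ⟨g k, k, l, hkl, hg k, hg_eq ▸ hg l⟩

/-- The state `(x, y₁, z₁, y₂, z₂)` reached on input `n` with `h₁` and `¬h₂` after the `n` joint
iterations, when the second copy's loop ends. -/
abbrev exitState (n : ℤ) : Fin 5 → ℤ := ![n, n ^ 2, n, n ^ 2, 0]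

theorem even_exitState_add {n m : ℤ} (hn : Even n) (hm : Even m) (i : Fin 5) :
    Even (exitState n i + exitState m i) := by
  fin_cases i <;> simp [Int.even_add, Int.even_pow, hn, hm]

/-- Running the loop from `w` adds `w 0 * w 2` to `y₁` and nothing to `y₂`, as `z₂ = 0`. -/
theorem midpoint_exitState_loop_ne {n m : ℤ} {w : Fin 5 → ℤ}
    (hw : ∀ i, 2 * w i = exitState n i + exitState m i) (hnm : n + m ≠ 0) :
    w 1 + w 0 * w 2 ≠ w 3 := by
  have h0 := hw 0
  have h1 := hw 1
  have h2 := hw 2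
  have h3 := hw 3
  simp only [exitState, Matrix.cons_val] at h0 h1 h2 h3
  have hw0 : w 0 ≠ 0 := by omega
  have : w 0 * w 2 ≠ 0 := by rw [show w 2 = w 0 by omega]; exact mul_ne_zero hw0 hw0
  omega

/-- No QFLIA invariant exists for the control-structure-synchronized
self-composition of `doubleSquare`.  Specifically: any finite family of integer-convex
(LIA-cube-definable) sets whose union contains all reachable loop-exit states
`(n, n², n, n², 0)` for even `n > 0` must contain, in one of its members, a midpoint
state `w = ((n+m)/2, (n²+m²)/2, (n+m)/2, (n²+m²)/2, 0)` with `n ≠ m`, from which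
executing the loop yields `y₁ = w 1 + w 0 * w 2 ≠ w 3 = y₂`, violating safety. -/
theorem no_qflia_invariant_for_sync_doubleSquare {ι : Type*} [Finite ι]
    (D : ι → Set (Fin 5 → ℤ))
    (hconv : ∀ j : ι, ∀ u ∈ D j, ∀ v ∈ D j, ∀ p q : ℤ, 0 ≤ p → 0 ≤ q → 0 < p + q →
      ∀ w : Fin 5 → ℤ, (∀ i, (p + q) * w i = p * u i + q * v i) → w ∈ D j)
    (hcover : ∀ n : ℤ, 0 < n → Even n →
      (![n, n ^ 2, n, n ^ 2, 0] : Fin 5 → ℤ) ∈ ⋃ j, D j) :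
    ∃ (j : ι) (n m : ℤ), 0 < n ∧ 0 < m ∧ Even n ∧ Even m ∧ n ≠ m ∧
      ∃ w : Fin 5 → ℤ,
        (∀ i, 2 * w i =
          (![n, n ^ 2, n, n ^ 2, 0] : Fin 5 → ℤ) i +
          (![m, m ^ 2, m, m ^ 2, 0] : Fin 5 → ℤ) i) ∧
        w ∈ D j ∧ w 1 + w 0 * w 2 ≠ w 3 := by
  obtain ⟨j, k, l, hkl, hk, hl⟩ := Finite.exists_ne_mem_of_forall_mem_iUnion
    (fun k : ℕ => exitState (2 * (k + 1))) fun k => hcover _ (by positivity) (even_two_mul _)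
  have hn : Even (2 * ((k : ℤ) + 1)) := even_two_mul _
  have hm : Even (2 * ((l : ℤ) + 1)) := even_two_mul _
  obtain ⟨w, hw⟩ := exists_two_mul_eq_add_of_even (even_exitState_add hn hm)
  exact ⟨j, _, _, by positivity, by positivity, hn, hm, by omega, w, hw,
    IsIntConvex.mem_of_two_mul_eq_add (hconv j) hk hl hw,
    midpoint_exitState_loop_ne hw (by positivity)⟩
end

section
/- If for some abstract state ŝ every non-starving value M is excluded (i.e., (ŝ, M) ∈ E for all non-starving M, where E only contains pairs shown to lead to abstract counterexamples), then for every fair composition function f' whose abstraction satisfies the safety and coverage conditions, ŝ is unreachable in the abstraction of T^{f'} from the abstract pre-condition. -/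
/-- Transition relation of the composed system `T^g`, for a (possibly partial)
composition function `g` over abstract states; `g v = ∅` means `g` is undefined at
`v`. -/
def compStepA {S ι : Type*} {k : ℕ} (pred : ι → Set (Fin k → S)) (R : S → S → Prop)
    (g : (ι → Prop) → Finset (Fin k)) (x x' : Fin k → S) : Prop :=
  (∀ i ∈ g (alphaMap pred x), R (x i) (x' i)) ∧
    ∀ i ∉ g (alphaMap pred x), x' i = x i

/-- Abstract transition relation of `T^g` under predicate abstraction. -/
def absTransA {S ι : Type*} {k : ℕ} (pred : ι → Set (Fin k → S)) (R : S → S → Prop)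
    (g : (ι → Prop) → Finset (Fin k)) (v₁ v₂ : ι → Prop) : Prop :=
  ∃ x₁ x₂ : Fin k → S, alphaMap pred x₁ = v₁ ∧ alphaMap pred x₂ = v₂ ∧
    compStepA pred R g x₁ x₂

theorem all_values_excluded_implies_unreachable_general {S ι : Type*} {k : ℕ}
    (pred : ι → Set (Fin k → S)) (R : S → S → Prop)
    (preA safeA : Set (ι → Prop)) (FA : Fin k → Set (ι → Prop))
    (E : Set ((ι → Prop) × Finset (Fin k))) (sh : ι → Prop)
    (hE : ∀ p ∈ E, ∀ g : (ι → Prop) → Finset (Fin k), g p.1 = p.2 →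
      (∃ v₀ ∈ preA, Relation.ReflTransGen (absTransA pred R g) v₀ p.1) →
      ∃ v₀ ∈ preA, ∃ t, Relation.ReflTransGen (absTransA pred R g) v₀ t ∧
        (t ∉ safeA ∨ g t = ∅))
    (hall : ∀ M : Finset (Fin k), M.Nonempty →
      ((∃ i, sh ∉ FA i) → ∃ j ∈ M, sh ∉ FA j) → (sh, M) ∈ E) :
    ∀ g : (ι → Prop) → Finset (Fin k),
      (∀ v : ι → Prop, (g v).Nonempty → (∃ i, v ∉ FA i) → ∃ j ∈ g v, v ∉ FA j) →
      (∀ t : ι → Prop, (∃ v₀ ∈ preA, Relation.ReflTransGen (absTransA pred R g) v₀ t) →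
        t ∈ safeA ∧ (g t).Nonempty) →
      ¬ ∃ v₀ ∈ preA, Relation.ReflTransGen (absTransA pred R g) v₀ sh := by
  intro g hfair hsafe hreach
  have hdefined : (g sh).Nonempty := (hsafe sh hreach).2
  -- By fairness the value `g sh` is non-starving, hence excluded.
  have hexcluded : (sh, g sh) ∈ E := hall (g sh) hdefined (hfair sh hdefined)
  obtain ⟨v₀, hv₀, t, ht, hbad⟩ := hE _ hexcluded g rfl hreach
  obtain ⟨ht_safe, ht_defined⟩ := hsafe t ⟨v₀, hv₀, ht⟩
  rcases hbad with ht_unsafe | ht_undefined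
  · exact ht_unsafe ht_safe
  · exact ht_defined.ne_empty ht_undefined

/-- Suppose every non-starving value `M` is excluded for the abstract
state `sh` (i.e. `(sh, M) ∈ E` for all non-starving `M`), where `E` satisfies the
invariant that each excluded pair leads to an abstract counterexample (to safety S1 or
coverage S2) for any composition function taking that value.  Then for every fair
composition function `g` whose abstraction satisfies the safety and coverage
conditions, `sh` is unreachable in the abstraction of `T^g` from the abstract
pre-condition. -/
theorem all_values_excluded_implies_unreachable {S ι : Type*} {k : ℕ}
    (pred : ι → Set (Fin k → S)) (R : S → S → Prop) (F : Set S)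
    (preA safeA : Set (ι → Prop)) (FA : Fin k → Set (ι → Prop))
    (hFA : ∀ (x : Fin k → S) (i : Fin k), x i ∈ F ↔ alphaMap pred x ∈ FA i)
    (E : Set ((ι → Prop) × Finset (Fin k))) (sh : ι → Prop)
    (hE : ∀ p ∈ E, ∀ g : (ι → Prop) → Finset (Fin k), g p.1 = p.2 →
      (∃ v₀ ∈ preA, Relation.ReflTransGen (absTransA pred R g) v₀ p.1) →
      ∃ v₀ ∈ preA, ∃ t, Relation.ReflTransGen (absTransA pred R g) v₀ t ∧
        (t ∉ safeA ∨ g t = ∅))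
    (hall : ∀ M : Finset (Fin k), M.Nonempty →
      ((∃ i, sh ∉ FA i) → ∃ j ∈ M, sh ∉ FA j) → (sh, M) ∈ E) :
    ∀ g : (ι → Prop) → Finset (Fin k),
      (∀ v : ι → Prop, (g v).Nonempty → (∃ i, v ∉ FA i) → ∃ j ∈ g v, v ∉ FA j) →
      (∀ t : ι → Prop, (∃ v₀ ∈ preA, Relation.ReflTransGen (absTransA pred R g) v₀ t) →
        t ∈ safeA ∧ (g t).Nonempty) →
      ¬ ∃ v₀ ∈ preA, Relation.ReflTransGen (absTransA pred R g) v₀ sh :=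
  all_values_excluded_implies_unreachable_general pred R preA safeA FA E sh hE hall
end

section
/- The sequential composition function — scheduling only the least-index non-terminated copy, and copy k when all have terminated — is a well-defined total composition function (its defining conditions partition S^k) and is fair. -/
open List
section
variable {S : Type*} {k : ℕ} [DecidableRel (fun a b : S => a ≠ b)]
variable {R : S → S → Prop} {F : Set S}
variable {f : (Fin (k+1) → S) → Finset (Fin (k+1))}

lemma dest'_const (l : List S) (a : S) (h : ∀ x ∈ l, x = a) :
    l.destutter' (· ≠ ·) a = [a] := by
  induction l with
  | nil => simp
  | cons b t ih =>
    have hb : b = a := h b (by simp)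
    rw [destutter'_cons, if_neg (by simp [hb])]
    exact ih fun x hx => h x (by simp [hx])

lemma dest'_append_const (l₁ : List S) (a : S) (l₂ : List S) {b : S}
    (h : ∀ x ∈ l₂, x = b) (hb : (a :: l₁).getLast (by simp) = b) :
    (l₁ ++ l₂).destutter' (· ≠ ·) a = l₁.destutter' (· ≠ ·) a := by
  induction l₁ generalizing a with
  | nil =>
    simp only [List.nil_append, destutter'_nil]
    exact dest'_const l₂ a (by simpa [← hb] using h)
  | cons c t ih =>
    rw [List.cons_append, destutter'_cons, destutter'_cons]
    have hlast : (c :: t).getLast (by simp) = b := by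
      rwa [List.getLast_cons (by simp)] at hb
    by_cases hac : a ≠ c
    · rw [if_pos hac, if_pos hac, ih c hlast]
    · push_neg at hac
      subst hac
      rw [if_neg (by simp), if_neg (by simp)]
      exact ih a hlast

lemma dest'_const_append (l₁ : List S) (c : S) (rest : List S)
    (h : ∀ x ∈ l₁, x = c) :
    (l₁ ++ rest).destutter' (· ≠ ·) c = rest.destutter' (· ≠ ·) c := by
  induction l₁ with
  | nil => simp
  | cons b t ih =>
    have hb : b = c := h b (by simp)
    rw [List.cons_append, destutter'_cons, if_neg (by simp [hb]), ih fun x hx => h x (by simp [hx])]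

lemma dest_append_const (l : List S) (hl : l ≠ []) (t : List S)
    (h : ∀ x ∈ t, x = l.getLast hl) :
    (l ++ t).destutter (· ≠ ·) = l.destutter (· ≠ ·) := by
  obtain ⟨a, l', rfl⟩ := List.exists_cons_of_ne_nil hl
  rw [List.cons_append, destutter_cons', destutter_cons']
  exact dest'_append_const l' a t h rfl

lemma dest_const_append (l₁ : List S) (hl : l₁ ≠ []) (c : S) (rest : List S)
    (h : ∀ x ∈ l₁, x = c) :
    (l₁ ++ rest).destutter (· ≠ ·) = (c :: rest).destutter (· ≠ ·) := by
  obtain ⟨b, t, rfl⟩ := List.exists_cons_of_ne_nil hl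
  have hb : b = c := h b (by simp)
  subst hb
  rw [List.cons_append, destutter_cons', destutter_cons']
  exact dest'_const_append t b rest fun x hx => h x (by simp [hx])

lemma dest_cons_congr (a : S) {s l : List S} (hne : s ≠ []) (hh : s.head? = l.head?)
    (hd : s.destutter (· ≠ ·) = l.destutter (· ≠ ·)) :
    (a :: s).destutter (· ≠ ·) = (a :: l).destutter (· ≠ ·) := by
  obtain ⟨b, s₂, rfl⟩ := List.exists_cons_of_ne_nil hne
  have hlne : l ≠ [] := by
    rintro rfl; simp at hh
  obtain ⟨c, l₂, rfl⟩ := List.exists_cons_of_ne_nil hlne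
  have hbc : b = c := by simpa using hh
  subst hbc
  rw [destutter_cons_cons, destutter_cons_cons]
  by_cases hab : a ≠ b
  · rw [if_pos hab, if_pos hab]
    rw [destutter_cons', destutter_cons'] at hd
    rw [hd]
  · push_neg at hab
    subst hab
    rw [if_neg (by simp), if_neg (by simp)]
    rw [destutter_cons', destutter_cons'] at hd
    exact hd


lemma tail_const_of_F (hterm : ∀ s ∈ F, R s s ∧ ∀ t, R s t → t = s) :
    ∀ (l : List S) (a : S), a ∈ F → (a :: l).Chain' R → ∀ x ∈ l, x = a := by
  intro l
  induction l with
  | nil => simp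
  | cons b t ih =>
    intro a haF hch x hx
    have hab : R a b := (List.isChain_cons_cons.mp hch).1
    have hba : b = a := (hterm a haF).2 b hab
    subst hba
    rcases List.mem_cons.mp hx with h | h
    · exact h
    · exact ih b haF (List.isChain_cons_cons.mp hch).2 x h


lemma trunc_exists (hterm : ∀ s ∈ F, R s s ∧ ∀ t, R s t → t = s) :
    ∀ (l : List S), l.Chain' R → (∃ t ∈ l, t ∈ F) →
      ∃ s : List S, s ≠ [] ∧ s.head? = l.head? ∧
        s.Chain' (fun a b => R a b ∧ a ∉ F) ∧
        (∃ t, s.getLast? = some t ∧ t ∈ F) ∧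
        s.destutter (· ≠ ·) = l.destutter (· ≠ ·) := by
  intro l
  induction l with
  | nil => rintro _ ⟨t, ht, -⟩; simp at ht
  | cons a l' ih =>
    intro hch hex
    by_cases haF : a ∈ F
    · refine ⟨[a], by simp, by simp, List.isChain_singleton _, ⟨a, by simp, haF⟩, ?_⟩
      have hconst : ∀ x ∈ l', x = a := tail_const_of_F hterm l' a haF hch
      rw [destutter_singleton, destutter_cons', dest'_const l' a hconst]
    · obtain ⟨t, ht, htF⟩ := hex
      have htl' : t ∈ l' := by
        rcases List.mem_cons.mp ht with h | h
        · exact absurd (h ▸ htF) haF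
        · exact h
      have hl'ne : l' ≠ [] := List.ne_nil_of_mem htl'
      obtain ⟨s', hs'ne, hs'h, hs'ch, hs'last, hs'dest⟩ :=
        ih hch.tail ⟨t, htl', htF⟩
      refine ⟨a :: s', by simp, by simp, ?_, ?_, ?_⟩
      · rw [List.Chain', List.isChain_cons]
        constructor
        · intro y hy
          obtain ⟨b, l₂, rfl⟩ := List.exists_cons_of_ne_nil hl'ne
          have hby : y = b := by
            have : s'.head? = some b := by simpa using hs'h
            simp [this] at hy; exact hy.symm
          subst hby
          exact ⟨(List.isChain_cons_cons.mp hch).1, haF⟩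
        · exact hs'ch
      · obtain ⟨t', ht'⟩ := hs'last
        exact ⟨t', List.mem_getLast?_cons ht'.1, ht'.2⟩
      · exact dest_cons_congr a hs'ne hs'h hs'dest

/-- The main construction. -/
lemma seq_build
    (σ : Fin (k+1) → List S) (hne : ∀ i, σ i ≠ [])
    (hch : ∀ i, (σ i).Chain' (fun a b => R a b ∧ a ∉ F))
    (hlastF : ∀ i, (σ i).getLast (hne i) ∈ F)
    (hsched : ∀ (x : Fin (k+1) → S) (m : Fin (k+1)),
      (∀ j, j < m → x j ∈ F) → x m ∉ F → f x = {m}) :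
    ∀ d : ℕ, ∃ L : List (Fin (k+1) → S),
      L.Chain' (compStep R f) ∧ L ≠ [] ∧
      L.head? = some (fun j : Fin (k+1) => if (j : ℕ) < k + 1 - d then (σ j).getLast (hne j)
        else (σ j).head (hne j)) ∧
      (∀ j : Fin (k+1), (j : ℕ) < k + 1 - d → ∀ y ∈ L, y j = (σ j).getLast (hne j)) ∧
      (∀ j : Fin (k+1), k + 1 - d ≤ (j : ℕ) →
        (L.map (fun y => y j)).destutter (· ≠ ·) = (σ j).destutter (· ≠ ·)) := by
  intro d
  induction d with
  | zero =>
    refine ⟨[fun j : Fin (k+1) => if (j : ℕ) < k + 1 - 0 then (σ j).getLast (hne j)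
        else (σ j).head (hne j)], List.isChain_singleton _, by simp, rfl, ?_, ?_⟩
    · intro j hj y hy
      simp only [List.mem_singleton] at hy
      subst hy
      have hjk : (j : ℕ) ≤ k := by omega
      simp [hjk]
    · intro j hj
      exact absurd (lt_of_le_of_lt hj j.isLt) (by omega)
  | succ d ihd =>
    obtain ⟨L', hL'ch, hL'ne, hL'h, hL'const, hL'dest⟩ := ihd
    by_cases hd0 : k + 1 - d = 0
    · have : k + 1 - (d + 1) = 0 := by omega
      refine ⟨L', hL'ch, hL'ne, ?_, fun j hj => hL'const j (by omega),
        fun j hj => hL'dest j (by omega)⟩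
      rw [hL'h, this, hd0]
    · -- one more phase
      set m : ℕ := k - d with hm
      have hmd : k + 1 - d = m + 1 := by omega
      have hmd' : k + 1 - (d + 1) = m := by omega
      have hmk : m < k + 1 := by omega
      set m' : Fin (k + 1) := ⟨m, hmk⟩ with hm'
      set Y : S → (Fin (k+1) → S) := fun b j =>
        if (j : ℕ) < m then (σ j).getLast (hne j)
        else if (j : ℕ) = m then b else (σ j).head (hne j) with hY
      -- head of L'
      set X1 : Fin (k+1) → S := fun j => if (j : ℕ) < k + 1 - d then (σ j).getLast (hne j)
        else (σ j).head (hne j) with hX1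
      obtain ⟨x₀, T, rfl⟩ := List.exists_cons_of_ne_nil hL'ne
      have hx₀ : x₀ = X1 := by simpa using hL'h
      subst hx₀
      have hYlast : Y ((σ m').getLast (hne m')) = X1 := by
        funext j
        simp only [hY, hX1, hmd]
        rcases lt_trichotomy (j : ℕ) m with h | h | h
        · rw [if_pos h, if_pos (by omega)]
        · have hj : j = m' := Fin.ext h
          subst hj
          rw [if_neg (by omega), if_pos h, if_pos (by omega)]
        · rw [if_neg (by omega), if_neg (by omega), if_neg (by omega)]
      refine ⟨((σ m').map Y) ++ T, ?_, by simp [hne m'], ?_, ?_, ?_⟩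
      · -- Chain'
        rw [List.Chain', List.isChain_append]
        refine ⟨?_, hL'ch.tail, ?_⟩
        · rw [List.isChain_map]
          refine (hch m').imp ?_
          intro a b hab
          have hfa : f (Y a) = {m'} := by
            apply hsched
            · intro j hj
              have : (j : ℕ) < m := hj
              simp only [hY]
              rw [if_pos this]
              exact hlastF j
            · show (if (m' : ℕ) < m then _ else if ((m' : Fin (k+1)) : ℕ) = m then a else _) ∉ F
              rw [if_neg (by simp [hm']), if_pos (by simp [hm'])]
              exact hab.2
          have hYm : ∀ c : S, Y c m' = c := by
            intro c
            simp only [hY]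
            rw [if_neg (by simp [hm']), if_pos (by simp [hm'])]
          constructor
          · intro i hi
            rw [hfa, Finset.mem_singleton] at hi
            subst hi
            rw [hYm, hYm]
            exact hab.1
          · intro i hi
            rw [hfa, Finset.mem_singleton] at hi
            have hne' : (i : ℕ) ≠ m := fun h => hi (Fin.ext (by simp [hm', h]))
            simp only [hY]
            rcases lt_or_ge (i : ℕ) m with h | h
            · rw [if_pos h, if_pos h]
            · rw [if_neg (by omega), if_neg hne', if_neg (by omega), if_neg hne']
        · -- junction
          intro x hx y hy
          rw [List.getLast?_map, List.getLast?_eq_getLast_of_ne_nil (hne m')] at hx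
          have hx' : x = Y ((σ m').getLast (hne m')) := by simpa using hx.symm
          subst hx'
          rw [hYlast]
          exact (List.isChain_cons.mp hL'ch).1 y hy
      · -- head?
        rw [List.head?_append, List.head?_map, List.head?_eq_head (hne m')]
        show some _ = some _
        congr 1
        funext j
        simp only [hY, hmd']
        rcases lt_trichotomy (j : ℕ) m with h | h | h
        · rw [if_pos h, if_pos h]
        · have hj : j = m' := Fin.ext h
          subst hj
          rw [if_neg (by omega), if_pos h, if_neg (by omega)]
        · rw [if_neg (by omega), if_neg (by omega), if_neg (by omega)]
      · -- constancy
        intro j hj y hy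
        rw [hmd'] at hj
        rw [List.mem_append] at hy
        rcases hy with hy | hy
        · obtain ⟨b, hb, rfl⟩ := List.mem_map.mp hy
          simp only [hY]
          rw [if_pos hj]
        · exact hL'const j (by omega) y (List.mem_cons_of_mem _ hy)
      · -- destutter
        intro j hj
        rw [hmd'] at hj
        rw [List.map_append, List.map_map]
        have hYm : ∀ c : S, Y c m' = c := by
          intro c
          simp only [hY]
          rw [if_neg (by simp [hm']), if_pos (by simp [hm'])]
        rcases eq_or_lt_of_le hj with hjm | hjm
        · -- j = m'
          have hj' : j = m' := Fin.ext hjm.symm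
          subst hj'
          have hmap : (σ m').map ((fun y => y m') ∘ Y) = σ m' := by
            conv_rhs => rw [← List.map_id (σ m')]
            apply List.map_congr_left
            intro b hb
            simp only [Function.comp_apply, id_eq]
            exact hYm b
          rw [hmap]
          apply dest_append_const (σ m') (hne m')
          intro x hx
          obtain ⟨y, hyT, rfl⟩ := List.mem_map.mp hx
          exact hL'const m' (by omega) y (List.mem_cons_of_mem _ hyT)
        · -- m < j
          have h1 : ∀ b ∈ σ m', ((fun y => y j) ∘ Y) b = (σ j).head (hne j) := by
            intro b hb
            simp only [Function.comp_apply, hY]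
            rw [if_neg (by omega), if_neg (by omega)]
          rw [List.map_congr_left h1]
          rw [dest_const_append _ (by simp [hne m']) ((σ j).head (hne j)) _
            (by intro x hx; obtain ⟨b, hb, rfl⟩ := List.mem_map.mp hx; rfl)]
          have h2 : (σ j).head (hne j) :: T.map (fun y => y j)
              = (X1 :: T).map (fun y => y j) := by
            simp only [List.map_cons]
            congr 1
            simp only [hX1]
            rw [if_neg (by omega)]
          rw [h2]
          exact hL'dest j (by omega)
end

/-- The sequential composition — whose conditions schedule only the
least-index non-terminated copy, and the last copy when all copies have terminated —
is a well-defined total composition function (its conditions partition `S^k`: every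
composed state satisfies exactly one condition `C_{i}`, and all non-singleton
conditions are empty), and it is fair.  Here the system has `k+1 ≥ 1` copies. -/
theorem sequential_composition_total_and_fair {S : Type*} {k : ℕ}
    (R : S → S → Prop) (F : Set S)
    (hterm : ∀ s ∈ F, R s s ∧ ∀ t, R s t → t = s) :
    let C : Finset (Fin (k + 1)) → Set (Fin (k + 1) → S) :=
      fun M => {x | ∃ i : Fin (k + 1), M = {i} ∧ (∀ j, j < i → x j ∈ F) ∧
        (i = Fin.last k ∨ x i ∉ F)}
    (∀ x : Fin (k + 1) → S, ∃! i : Fin (k + 1), x ∈ C {i}) ∧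
    (∀ M : Finset (Fin (k + 1)), (¬ ∃ i : Fin (k + 1), M = {i}) → C M = ∅) ∧
    (∀ f : (Fin (k + 1) → S) → Finset (Fin (k + 1)),
      (∀ x, x ∈ C (f x)) → Fair R F f) := by
  intro C
  have hC : ∀ (M : Finset (Fin (k+1))) (x : Fin (k+1) → S),
      x ∈ C M ↔ ∃ i : Fin (k + 1), M = {i} ∧ (∀ j, j < i → x j ∈ F) ∧
        (i = Fin.last k ∨ x i ∉ F) := fun M x => Iff.rfl
  classical
  have part1 : ∀ x : Fin (k + 1) → S, ∃! i : Fin (k + 1), x ∈ C {i} := by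
    intro x
    by_cases h : ∀ i, x i ∈ F
    · refine ⟨Fin.last k, (hC _ x).mpr ⟨Fin.last k, rfl, fun j _ => h j, Or.inl rfl⟩, ?_⟩
      intro i' hi'
      obtain ⟨i, hMi, hcnd, hdj⟩ := (hC _ x).mp hi'
      have hii : i' = i := Finset.singleton_injective hMi
      subst hii
      rcases hdj with hdj | hdj
      · exact hdj
      · exact absurd (h i') hdj
    · push_neg at h
      have hTne : (Finset.univ.filter (fun i => x i ∉ F)).Nonempty := by
        obtain ⟨i, hi⟩ := h
        exact ⟨i, by simp [hi]⟩
      obtain ⟨i₀, hi₀T, hmin⟩ :=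
        Finset.exists_min_image (Finset.univ.filter (fun i => x i ∉ F)) id hTne
      have hxi₀ : x i₀ ∉ F := (Finset.mem_filter.mp hi₀T).2
      have hlt : ∀ j, j < i₀ → x j ∈ F := by
        intro j hj
        by_contra hjF
        exact absurd hj (not_lt.mpr (hmin j (by simp [hjF])))
      refine ⟨i₀, (hC _ x).mpr ⟨i₀, rfl, hlt, Or.inr hxi₀⟩, ?_⟩
      intro i' hi'
      obtain ⟨i, hMi, hcnd, hdj⟩ := (hC _ x).mp hi'
      have hii : i' = i := Finset.singleton_injective hMi
      subst hii
      rcases lt_trichotomy i' i₀ with hlt' | heq | hgt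
      · have hF' : x i' ∈ F := by
          by_contra hnF
          exact absurd hlt' (not_lt.mpr (hmin i' (by simp [hnF])))
        rcases hdj with hdj | hdj
        · subst hdj
          exact absurd (lt_of_lt_of_le hlt' (Fin.le_last i₀)) (lt_irrefl _)
        · exact absurd hF' hdj
      · exact heq
      · exact absurd hxi₀ (not_not.mpr (hcnd i₀ hgt))
  refine ⟨part1, ?_, ?_⟩
  · intro M hM
    ext x
    simp only [Set.mem_empty_iff_false, iff_false]
    intro hx
    obtain ⟨i, hMi, -⟩ := (hC _ x).mp hx
    exact hM ⟨i, hMi⟩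
  · intro f hf
    intro π hπ
    have hsched : ∀ (x : Fin (k + 1) → S) (m : Fin (k + 1)),
        (∀ j, j < m → x j ∈ F) → x m ∉ F → f x = {m} := by
      intro x m hjF hmF
      have hxm : x ∈ C {m} := (hC _ x).mpr ⟨m, rfl, hjF, Or.inr hmF⟩
      obtain ⟨i, hMi, hcnd, hdj⟩ := (hC _ x).mp (hf x)
      have hxi : x ∈ C {i} := (hC _ x).mpr ⟨i, rfl, hcnd, hdj⟩
      have him : i = m := (part1 x).unique hxi hxm
      rw [hMi, him]
    have hσ : ∀ i : Fin (k + 1), ∃ s : List S, s ≠ [] ∧ s.head? = (π i).head? ∧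
        s.Chain' (fun a b => R a b ∧ a ∉ F) ∧
        (∃ t, s.getLast? = some t ∧ t ∈ F) ∧
        s.destutter (· ≠ ·) = (π i).destutter (· ≠ ·) := by
      intro i
      obtain ⟨hchain, t, hlast, htF⟩ := hπ i
      exact trunc_exists hterm (π i) hchain ⟨t, List.mem_of_getLast? hlast, htF⟩
    choose σ hσne hσh hσch hσlast hσdest using hσ
    have hlastF : ∀ i, (σ i).getLast (hσne i) ∈ F := by
      intro i
      obtain ⟨t, ht, htF⟩ := hσlast i
      rw [List.getLast?_eq_getLast_of_ne_nil (hσne i)] at ht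
      rw [Option.some_inj] at ht
      rw [ht]
      exact htF
    obtain ⟨L, hLch, hLne, hLh, hLconst, hLdest⟩ :=
      seq_build σ hσne hσch hlastF hsched (k + 1)
    exact ⟨L, hLch, fun i => (hLdest i (by omega)).trans (hσdest i)⟩
end
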